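/- arXiv:1403.1479 — 7 statements merged into one kernel-verified Lean document; each statement's English description precedes it below -/
import Mathlib

section
/- Let G be a connected graph on n ≥ 2 vertices with adjacency matrix A, and let x be the principal eigenvector of G, i.e., the entrywise positive eigenvector of A corresponding to the spectral radius ρ of A, normalized so that ∑_{i=1}^n x_i² = 1. Then the largest entry x_max of x satisfies x_max ≤ 1/√2. -/
open Matrix

/-- The spectral radius of a real square matrix: the supremum of the absolute values of
its (real) eigenvalues. -/
noncomputable def specRad {V : Type*} [Fintype V] [DecidableEq V] (A : Matrix V V ℝ) : ℝ :=
  sSup {r : ℝ | ∃ μ : ℝ, Module.End.HasEigenvalue (Matrix.toLin' A) μ ∧ r = |μ|}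

/-- **Papendieck–Recht.** If `G` is a connected graph on `n ≥ 2` vertices and `x` is its
principal eigenvector (the positive eigenvector for the spectral radius `ρ`, normalized so
that `∑ x i ^ 2 = 1`), then every entry of `x` (in particular the largest one) is at most
`1 / √2`. -/
theorem stmt0 {n : ℕ} (hn : 2 ≤ n) (G : SimpleGraph (Fin n)) [DecidableRel G.Adj]
    (hG : G.Connected) (x : Fin n → ℝ) (ρ : ℝ)
    (hρ : ρ = specRad (G.adjMatrix ℝ))
    (hx_pos : ∀ i, 0 < x i)
    (hx_norm : ∑ i, x i ^ 2 = 1)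
    (heig : G.adjMatrix ℝ *ᵥ x = ρ • x) :
    ∀ i, x i ≤ 1 / Real.sqrt 2 := by
  intro i
  -- eigen-equation entrywise
  have hei : ∀ v, ∑ j ∈ G.neighborFinset v, x j = ρ * x v := by
    intro v
    have := congrFun heig v
    rwa [SimpleGraph.adjMatrix_mulVec_apply, Pi.smul_apply, smul_eq_mul] at this
  -- i has a neighbor
  have hdeg : 0 < G.degree i := by
    rw [SimpleGraph.degree_pos_iff_exists_adj]
    haveI : Nontrivial (Fin n) := Fin.nontrivial_iff_two_le.mpr hn
    obtain ⟨j, hj⟩ := exists_ne i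
    obtain ⟨p⟩ := hG.preconnected i j
    have hnil : ¬ p.Nil := SimpleGraph.Walk.not_nil_of_ne hj.symm
    exact ⟨p.getVert 1, p.adj_snd hnil⟩
  set d : ℕ := G.degree i with hd
  -- ρ > 0
  have hρpos : 0 < ρ := by
    have h1 : 0 < ∑ j ∈ G.neighborFinset i, x j := by
      apply Finset.sum_pos (fun j _ => hx_pos j)
      rwa [← Finset.card_pos, SimpleGraph.card_neighborFinset_eq_degree]
    rw [hei i] at h1
    nlinarith [hx_pos i]
  -- lower bound ρ^2 ≥ d
  have hlow : (d : ℝ) * x i ≤ ρ ^ 2 * x i := by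
    have : ∑ j ∈ G.neighborFinset i, ρ * x j = ρ ^ 2 * x i := by
      rw [← Finset.mul_sum, hei i]; ring
    rw [← this]
    have : (d : ℝ) * x i = ∑ _j ∈ G.neighborFinset i, x i := by
      rw [Finset.sum_const, SimpleGraph.card_neighborFinset_eq_degree, nsmul_eq_mul]
    rw [this]
    apply Finset.sum_le_sum
    intro j hj
    rw [← hei j]
    apply Finset.single_le_sum (fun k _ => (hx_pos k).le)
    rw [SimpleGraph.mem_neighborFinset] at hj ⊢
    exact hj.symm
  -- Cauchy-Schwarz upper bound
  have hsub : ∑ j ∈ G.neighborFinset i, x j ^ 2 ≤ 1 - x i ^ 2 := by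
    have : ∑ j ∈ G.neighborFinset i, x j ^ 2 ≤ ∑ j ∈ Finset.univ.erase i, x j ^ 2 := by
      apply Finset.sum_le_sum_of_subset_of_nonneg
      · intro j hj
        rw [Finset.mem_erase]
        rw [SimpleGraph.mem_neighborFinset] at hj
        exact ⟨(G.ne_of_adj hj.symm), Finset.mem_univ j⟩
      · intro j _ _; positivity
    rw [Finset.sum_erase_eq_sub (Finset.mem_univ i), hx_norm] at this
    linarith
  have hcs : (ρ * x i) ^ 2 ≤ (d : ℝ) * (1 - x i ^ 2) := by
    rw [← hei i]
    calc (∑ j ∈ G.neighborFinset i, x j) ^ 2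
        ≤ (G.neighborFinset i).card * ∑ j ∈ G.neighborFinset i, x j ^ 2 :=
          sq_sum_le_card_mul_sum_sq
      _ ≤ (d : ℝ) * (1 - x i ^ 2) := by
          rw [SimpleGraph.card_neighborFinset_eq_degree]
          exact mul_le_mul_of_nonneg_left hsub (by positivity)
  -- combine: d * x i ^ 2 ≤ d * (1 - x i ^ 2)
  have hxi := hx_pos i
  have hkey : (d : ℝ) * x i ^ 2 ≤ (d : ℝ) * (1 - x i ^ 2) := by
    have h1 : (d : ℝ) * x i ^ 2 ≤ ρ ^ 2 * x i ^ 2 := by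
      have := mul_le_mul_of_nonneg_right hlow hxi.le
      calc (d : ℝ) * x i ^ 2 = (d : ℝ) * x i * x i := by ring
        _ ≤ ρ ^ 2 * x i * x i := this
        _ = ρ ^ 2 * x i ^ 2 := by ring
    calc (d : ℝ) * x i ^ 2 ≤ ρ ^ 2 * x i ^ 2 := h1
      _ = (ρ * x i) ^ 2 := by ring
      _ ≤ (d : ℝ) * (1 - x i ^ 2) := hcs
  have hd1 : (1 : ℝ) ≤ d := by exact_mod_cast hdeg
  have hx2 : x i ^ 2 ≤ 1 / 2 := by nlinarith
  have : x i ≤ Real.sqrt (1 / 2) := by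
    rw [← Real.sqrt_sq hxi.le]
    exact Real.sqrt_le_sqrt hx2
  rwa [Real.sqrt_div' 1 (by norm_num), Real.sqrt_one] at this
end

section
/- Let G be a connected graph on n ≥ 2 vertices with principal eigenvector x normalized so that ∑_{i=1}^n x_i² = 1. The largest entry of x equals 1/√2 if and only if G is the star K_{1,n-1} on n vertices. -/
/-!
Let `v` be a vertex of degree `d > 0`. Two-step walks give
`ρ² x_v = ∑_{u ~ v} ∑_{w ~ u} x_w ≥ d x_v`, while Cauchy–Schwarz and the normalization give
`ρ² x_v² = (∑_{u ~ v} x_u)² ≤ d (1 - x_v²)`. Hence `d x_v² ≤ d (1 - x_v²)`, i.e. `x_v² ≤ 1/2`.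
Equality forces both inequalities to be tight: `v` is adjacent to every other vertex, and the
neighbours of `v` have no neighbour besides `v`, so `G` is the star centred at `v`. Conversely,
on the star with centre `c` one computes `ρ² = n - 1` and `x_u = x_c / ρ` at every leaf, so
that `1 = x_c² + (n - 1) x_c² / ρ² = 2 x_c²`.
-/

open Matrix

open Finset

lemma lt_half_of_mul_lt_mul_one_sub {d a : ℝ} (hd : 0 ≤ d) (h : d * a < d * (1 - a)) :
    a < 1 / 2 := by
  linarith [lt_of_mul_lt_mul_left h hd]

namespace SimpleGraph

variable {V W : Type*}

lemma completeBipartiteGraph_eq_starGraph (α β : Type*) [Unique α] :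
    completeBipartiteGraph α β = starGraph (Sum.inl default : α ⊕ β) := by
  ext (a | a) (b | b) <;> simp [eq_iff_true_of_subsingleton]

def Iso.starGraph (e : V ≃ W) {r : V} {s : W} (h : e r = s) : starGraph r ≃g starGraph s :=
  ⟨e, by simp [← h, e.injective.eq_iff]⟩

lemma eq_starGraph_of_iso {G : SimpleGraph V} {s : W} (e : G ≃g starGraph s) :
    G = starGraph (e.symm s) := by
  ext a b
  rw [← e.map_adj_iff, starGraph_adj, starGraph_adj, e.injective.ne_iff, RelIso.eq_symm_apply,
    RelIso.eq_symm_apply]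

lemma nonempty_iso_completeBipartiteGraph_iff [Fintype V] {m : ℕ} (G : SimpleGraph V)
    (hcard : Fintype.card V = m + 1) :
    Nonempty (G ≃g completeBipartiteGraph (Fin 1) (Fin m)) ↔ ∃ r, G = starGraph r := by
  rw [completeBipartiteGraph_eq_starGraph]
  constructor
  · rintro ⟨e⟩
    exact ⟨_, eq_starGraph_of_iso e⟩
  · rintro ⟨r, rfl⟩
    let e : V ≃ Fin 1 ⊕ Fin m := Fintype.equivOfCardEq (by simp [hcard, add_comm])
    exact ⟨Iso.starGraph (e.trans (Equiv.swap (e r) (Sum.inl default)))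
      (Equiv.swap_apply_left _ _)⟩

section PrincipalEigenvector

variable [Fintype V] {G : SimpleGraph V} [DecidableRel G.Adj] {x : V → ℝ} {ρ : ℝ}

lemma sum_neighborFinset_of_mulVec_eq (heig : G.adjMatrix ℝ *ᵥ x = ρ • x) (v : V) :
    ∑ u ∈ G.neighborFinset v, x u = ρ * x v := by
  simpa using congrFun heig v

lemma sq_mul_eq_sum_sum_neighborFinset (heig : G.adjMatrix ℝ *ᵥ x = ρ • x) (v : V) :
    ρ ^ 2 * x v = ∑ u ∈ G.neighborFinset v, ∑ w ∈ G.neighborFinset u, x w := by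
  calc ρ ^ 2 * x v = ρ * ∑ u ∈ G.neighborFinset v, x u := by
        rw [sum_neighborFinset_of_mulVec_eq heig]; ring
    _ = _ := by rw [mul_sum]; simp_rw [sum_neighborFinset_of_mulVec_eq heig]

lemma degree_mul_le_sum_sum_neighborFinset (hx : ∀ i, 0 < x i) (v : V) :
    (G.degree v : ℝ) * x v ≤ ∑ u ∈ G.neighborFinset v, ∑ w ∈ G.neighborFinset u, x w := by
  rw [← card_neighborFinset_eq_degree, ← nsmul_eq_mul, ← sum_const]
  refine sum_le_sum fun u hu ↦ single_le_sum (fun w _ ↦ (hx w).le) ?_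
  exact (G.mem_neighborFinset u v).2 ((G.mem_neighborFinset v u).1 hu).symm

lemma degree_mul_lt_sum_sum_neighborFinset (hx : ∀ i, 0 < x i) {u v w : V} (hvu : G.Adj v u)
    (huw : G.Adj u w) (hwv : w ≠ v) :
    (G.degree v : ℝ) * x v < ∑ u ∈ G.neighborFinset v, ∑ w ∈ G.neighborFinset u, x w := by
  rw [← card_neighborFinset_eq_degree, ← nsmul_eq_mul, ← sum_const]
  refine sum_lt_sum (fun u' hu' ↦ single_le_sum (fun w _ ↦ (hx w).le) ?_)
    ⟨u, (G.mem_neighborFinset v u).2 hvu, single_lt_sum hwv ?_ ?_ (hx w) fun w _ _ ↦ (hx w).le⟩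
  · exact (G.mem_neighborFinset u' v).2 ((G.mem_neighborFinset v u').1 hu').symm
  · exact (G.mem_neighborFinset u v).2 hvu.symm
  · exact (G.mem_neighborFinset u w).2 huw

lemma degree_le_sq (hx : ∀ i, 0 < x i) (heig : G.adjMatrix ℝ *ᵥ x = ρ • x) (v : V) :
    (G.degree v : ℝ) ≤ ρ ^ 2 :=
  le_of_mul_le_mul_right (by
    rw [sq_mul_eq_sum_sum_neighborFinset heig]; exact degree_mul_le_sum_sum_neighborFinset hx v)
    (hx v)

lemma degree_lt_sq (hx : ∀ i, 0 < x i) (heig : G.adjMatrix ℝ *ᵥ x = ρ • x) {u v w : V}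
    (hvu : G.Adj v u) (huw : G.Adj u w) (hwv : w ≠ v) : (G.degree v : ℝ) < ρ ^ 2 :=
  lt_of_mul_lt_mul_right (by
    rw [sq_mul_eq_sum_sum_neighborFinset heig]
    exact degree_mul_lt_sum_sum_neighborFinset hx hvu huw hwv) (hx v).le

lemma sq_mul_sq_le_degree_mul_sum_sq (heig : G.adjMatrix ℝ *ᵥ x = ρ • x) (v : V) :
    ρ ^ 2 * x v ^ 2 ≤ G.degree v * ∑ u ∈ G.neighborFinset v, x u ^ 2 := by
  rw [← mul_pow, ← sum_neighborFinset_of_mulVec_eq heig, ← card_neighborFinset_eq_degree]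
  exact sq_sum_le_card_mul_sum_sq

variable [DecidableEq V]

lemma sum_sq_erase_eq (hx_norm : ∑ i, x i ^ 2 = 1) (v : V) :
    ∑ u ∈ univ.erase v, x u ^ 2 = 1 - x v ^ 2 := by
  rw [← hx_norm, ← add_sum_erase univ (fun u ↦ x u ^ 2) (mem_univ v)]
  ring

lemma neighborFinset_subset_erase (v : V) : G.neighborFinset v ⊆ univ.erase v :=
  fun u hu ↦ mem_erase.2 ⟨((G.mem_neighborFinset v u).1 hu).ne', mem_univ u⟩

lemma sum_sq_neighborFinset_le (hx_norm : ∑ i, x i ^ 2 = 1) (v : V) :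
    ∑ u ∈ G.neighborFinset v, x u ^ 2 ≤ 1 - x v ^ 2 := by
  rw [← sum_sq_erase_eq hx_norm]
  exact sum_le_sum_of_subset_of_nonneg (neighborFinset_subset_erase v) fun _ _ _ ↦ sq_nonneg _

lemma sum_sq_neighborFinset_lt (hx : ∀ i, 0 < x i) (hx_norm : ∑ i, x i ^ 2 = 1) {v w : V}
    (hwv : w ≠ v) (hvw : ¬G.Adj v w) :
    ∑ u ∈ G.neighborFinset v, x u ^ 2 < 1 - x v ^ 2 := by
  rw [← sum_sq_erase_eq hx_norm]
  exact sum_lt_sum_of_subset (neighborFinset_subset_erase v) (mem_erase.2 ⟨hwv, mem_univ w⟩)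
    (by simpa using hvw) (pow_pos (hx w) 2) fun _ _ _ ↦ sq_nonneg _

lemma sq_mul_sq_le_degree_mul (hx_norm : ∑ i, x i ^ 2 = 1)
    (heig : G.adjMatrix ℝ *ᵥ x = ρ • x) (v : V) : ρ ^ 2 * x v ^ 2 ≤ G.degree v * (1 - x v ^ 2) :=
  (sq_mul_sq_le_degree_mul_sum_sq heig v).trans <|
    mul_le_mul_of_nonneg_left (sum_sq_neighborFinset_le hx_norm v) (Nat.cast_nonneg _)

lemma sq_mul_sq_lt_degree_mul (hx : ∀ i, 0 < x i) (hx_norm : ∑ i, x i ^ 2 = 1)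
    (heig : G.adjMatrix ℝ *ᵥ x = ρ • x) {v w : V} (hv : 0 < G.degree v) (hwv : w ≠ v)
    (hvw : ¬G.Adj v w) : ρ ^ 2 * x v ^ 2 < G.degree v * (1 - x v ^ 2) :=
  (sq_mul_sq_le_degree_mul_sum_sq heig v).trans_lt <|
    mul_lt_mul_of_pos_left (sum_sq_neighborFinset_lt hx hx_norm hwv hvw) (by exact_mod_cast hv)

theorem sq_le_half (hx : ∀ i, 0 < x i) (hx_norm : ∑ i, x i ^ 2 = 1)
    (heig : G.adjMatrix ℝ *ᵥ x = ρ • x) {v : V} (hv : 0 < G.degree v) : x v ^ 2 ≤ 1 / 2 := by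
  have hchain : (G.degree v : ℝ) * x v ^ 2 ≤ G.degree v * (1 - x v ^ 2) :=
    (mul_le_mul_of_nonneg_right (degree_le_sq hx heig v) (sq_nonneg _)).trans
      (sq_mul_sq_le_degree_mul hx_norm heig v)
  have := le_of_mul_le_mul_left hchain (by exact_mod_cast hv)
  linarith

lemma sq_lt_half_of_not_adj (hx : ∀ i, 0 < x i) (hx_norm : ∑ i, x i ^ 2 = 1)
    (heig : G.adjMatrix ℝ *ᵥ x = ρ • x) {v w : V} (hv : 0 < G.degree v) (hwv : w ≠ v)
    (hvw : ¬G.Adj v w) : x v ^ 2 < 1 / 2 :=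
  lt_half_of_mul_lt_mul_one_sub (Nat.cast_nonneg _) <|
    (mul_le_mul_of_nonneg_right (degree_le_sq hx heig v) (sq_nonneg _)).trans_lt
      (sq_mul_sq_lt_degree_mul hx hx_norm heig hv hwv hvw)

lemma sq_lt_half_of_adj_of_adj (hx : ∀ i, 0 < x i) (hx_norm : ∑ i, x i ^ 2 = 1)
    (heig : G.adjMatrix ℝ *ᵥ x = ρ • x) {u v w : V} (hvu : G.Adj v u) (huw : G.Adj u w)
    (hwv : w ≠ v) : x v ^ 2 < 1 / 2 :=
  lt_half_of_mul_lt_mul_one_sub (Nat.cast_nonneg _) <|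
    (mul_lt_mul_of_pos_right (degree_lt_sq hx heig hvu huw hwv) (pow_pos (hx v) 2)).trans_le
      (sq_mul_sq_le_degree_mul hx_norm heig v)

theorem eq_starGraph_of_sq_eq_half (hx : ∀ i, 0 < x i) (hx_norm : ∑ i, x i ^ 2 = 1)
    (heig : G.adjMatrix ℝ *ᵥ x = ρ • x) {v : V} (hv : 0 < G.degree v)
    (hxv : x v ^ 2 = 1 / 2) : G = starGraph v := by
  have hcenter : ∀ w, w ≠ v → G.Adj v w := fun w hwv ↦ by
    by_contra hvw
    exact (sq_lt_half_of_not_adj hx hx_norm heig hv hwv hvw).ne hxv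
  ext a b
  rw [starGraph_adj]
  constructor
  · intro hab
    refine ⟨hab.ne, ?_⟩
    by_contra! h
    exact (sq_lt_half_of_adj_of_adj hx hx_norm heig (hcenter a h.1) hab h.2).ne hxv
  · rintro ⟨hab, rfl | rfl⟩
    · exact hcenter b hab.symm
    · exact (hcenter a hab).symm

theorem sq_eq_half_of_eq_starGraph [Nontrivial V] (hx : ∀ i, 0 < x i)
    (hx_norm : ∑ i, x i ^ 2 = 1) (heig : G.adjMatrix ℝ *ᵥ x = ρ • x) {c : V}
    (hG : G = starGraph c) : x c ^ 2 = 1 / 2 := by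
  subst hG
  have hleaf : ∀ u, u ≠ c → (starGraph c).neighborFinset u = {c} := fun u hu ↦ by
    ext w
    simp only [mem_neighborFinset, starGraph_adj, mem_singleton]
    grind
  have hcenter : (starGraph c).neighborFinset c = univ.erase c := by
    ext w
    simp [eq_comm]
  have hleaf_eq : ∀ u ∈ univ.erase c, ρ * x u = x c := fun u hu ↦ by
    rw [← sum_neighborFinset_of_mulVec_eq heig, hleaf u (ne_of_mem_erase hu), sum_singleton]
  have hdeg : ((starGraph c).degree c : ℝ) = ρ ^ 2 := by
    refine mul_right_cancel₀ (hx c).ne' ?_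
    rw [sq_mul_eq_sum_sum_neighborFinset heig, ← card_neighborFinset_eq_degree, ← nsmul_eq_mul,
      ← sum_const]
    refine sum_congr rfl fun u hu ↦ ?_
    rw [hleaf u (ne_of_mem_erase (hcenter ▸ hu)), sum_singleton]
  have hρ : 0 < ρ ^ 2 := by
    obtain ⟨w, hw⟩ := exists_ne c
    rw [← hdeg]
    exact_mod_cast (starGraph_center_adj hw.symm).degree_pos_left
  -- `ρ² x_u² = x_c²` at each of the `ρ²` leaves, so the leaves carry the same mass `x_c²` as `c`.
  have hmass : ρ ^ 2 * (1 - x c ^ 2) = ρ ^ 2 * x c ^ 2 := by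
    rw [← sum_sq_erase_eq hx_norm, mul_sum]
    simp_rw [← mul_pow]
    rw [sum_congr rfl fun u hu ↦ by rw [hleaf_eq u hu], sum_const, ← hcenter,
      card_neighborFinset_eq_degree, nsmul_eq_mul, hdeg]
    ring
  linarith [mul_left_cancel₀ hρ.ne' hmass]

theorem iSup_eq_inv_sqrt_two_iff [Nonempty V] (hx : ∀ i, 0 < x i)
    (hx_norm : ∑ i, x i ^ 2 = 1) (heig : G.adjMatrix ℝ *ᵥ x = ρ • x) (hdeg : ∀ v, 0 < G.degree v) :
    (⨆ i, x i) = 1 / √2 ↔ ∃ v, x v ^ 2 = 1 / 2 := by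
  have hsqrt : 1 / √2 = √(1 / 2) := by rw [one_div, one_div, Real.sqrt_inv]
  have hentry : ∀ v, x v = √(1 / 2) ↔ x v ^ 2 = 1 / 2 := fun v ↦ by
    rw [eq_comm, Real.sqrt_eq_iff_eq_sq (by norm_num) (hx v).le, eq_comm]
  rw [hsqrt]
  constructor
  · intro h
    obtain ⟨v, hv⟩ := exists_eq_ciSup_of_finite (f := x)
    exact ⟨v, (hentry v).1 (hv.trans h)⟩
  · rintro ⟨v, hv⟩
    refine le_antisymm (ciSup_le fun i ↦ ?_) ?_
    · exact Real.le_sqrt_of_sq_le (sq_le_half hx hx_norm heig (hdeg i))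
    · rw [← (hentry v).2 hv]
      exact le_ciSup (Finite.bddAbove_range x) v

end PrincipalEigenvector

end SimpleGraph

open SimpleGraph

theorem stmt1_general {n : ℕ} (hn : 2 ≤ n) (G : SimpleGraph (Fin n)) [DecidableRel G.Adj]
    (hG : G.Connected) (x : Fin n → ℝ) (ρ : ℝ)
    (hx_pos : ∀ i, 0 < x i)
    (hx_norm : ∑ i, x i ^ 2 = 1)
    (heig : G.adjMatrix ℝ *ᵥ x = ρ • x) :
    (⨆ i, x i) = 1 / Real.sqrt 2 ↔
      Nonempty (G ≃g completeBipartiteGraph (Fin 1) (Fin (n - 1))) := by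
  have : Nontrivial (Fin n) := Fin.nontrivial_iff_two_le.mpr hn
  have hdeg : ∀ v, 0 < G.degree v := fun v ↦ hG.preconnected.degree_pos_of_nontrivial v
  rw [iSup_eq_inv_sqrt_two_iff hx_pos hx_norm heig hdeg,
    nonempty_iso_completeBipartiteGraph_iff G (by simp only [Fintype.card_fin]; omega)]
  constructor
  · rintro ⟨v, hv⟩
    exact ⟨v, eq_starGraph_of_sq_eq_half hx_pos hx_norm heig (hdeg v) hv⟩
  · rintro ⟨c, hc⟩
    exact ⟨c, sq_eq_half_of_eq_starGraph hx_pos hx_norm heig hc⟩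

/-- **Papendieck–Recht, equality case.** If `G` is a connected graph on `n ≥ 2` vertices with
principal eigenvector `x` (normalized so that `∑ x i ^ 2 = 1`), then the largest entry of `x`
equals `1 / √2` if and only if `G` is (isomorphic to) the star `K_{1,n-1}`. -/
theorem stmt1 {n : ℕ} (hn : 2 ≤ n) (G : SimpleGraph (Fin n)) [DecidableRel G.Adj]
    (hG : G.Connected) (x : Fin n → ℝ) (ρ : ℝ)
    (hρ : ρ = specRad (G.adjMatrix ℝ))
    (hx_pos : ∀ i, 0 < x i)
    (hx_norm : ∑ i, x i ^ 2 = 1)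
    (heig : G.adjMatrix ℝ *ᵥ x = ρ • x) :
    (⨆ i, x i) = 1 / Real.sqrt 2 ↔
      Nonempty (G ≃g completeBipartiteGraph (Fin 1) (Fin (n - 1))) :=
  stmt1_general hn G hG x ρ hx_pos hx_norm heig
end

section
/- Let G be a connected graph on n vertices with principal eigenvector x normalized so that ∑_{i=1}^n x_i² = 1, let ρ be the spectral radius of the adjacency matrix of G, and let d_i denote the degree of vertex i. Then for every vertex i, x_i ≤ 1/√(1 + ρ²/d_i). -/
open Matrix

/-- **Cioabă–Gregory.** If `G` is a connected graph on `n` vertices with principal eigenvector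
`x` (normalized so that `∑ x i ^ 2 = 1`), spectral radius `ρ`, and vertex degrees `d i = G.degree i`,
then for every vertex `i` we have `x i ≤ 1 / √(1 + ρ² / d i)`. -/
theorem stmt2 {n : ℕ} (G : SimpleGraph (Fin n)) [DecidableRel G.Adj]
    (hG : G.Connected) (x : Fin n → ℝ) (ρ : ℝ)
    (hρ : ρ = specRad (G.adjMatrix ℝ))
    (hx_pos : ∀ i, 0 < x i)
    (hx_norm : ∑ i, x i ^ 2 = 1)
    (heig : G.adjMatrix ℝ *ᵥ x = ρ • x) :
    ∀ i, x i ≤ 1 / Real.sqrt (1 + ρ ^ 2 / (G.degree i : ℝ)) := by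
  intro i
  have heq : ρ * x i = ∑ j ∈ G.neighborFinset i, x j := by
    have h := congrFun heig i
    rw [SimpleGraph.adjMatrix_mulVec_apply] at h
    simpa using h.symm
  set d : ℝ := (G.degree i : ℝ) with hdd
  have hd0 : (0:ℝ) ≤ d := Nat.cast_nonneg _
  have hxi2 : x i ^ 2 ≤ 1 := by
    rw [← hx_norm]
    exact Finset.single_le_sum (f := fun j => x j ^ 2) (fun j _ => sq_nonneg _)
      (Finset.mem_univ i)
  have hsum_le : ∑ j ∈ G.neighborFinset i, x j ^ 2 ≤ 1 - x i ^ 2 := by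
    have hsub : G.neighborFinset i ⊆ Finset.univ.erase i := by
      intro j hj
      rw [Finset.mem_erase]
      refine ⟨?_, Finset.mem_univ j⟩
      rintro rfl
      exact G.notMem_neighborFinset_self _ hj
    calc ∑ j ∈ G.neighborFinset i, x j ^ 2
        ≤ ∑ j ∈ Finset.univ.erase i, x j ^ 2 :=
          Finset.sum_le_sum_of_subset_of_nonneg hsub (fun j _ _ => sq_nonneg _)
      _ = 1 - x i ^ 2 := by
          rw [Finset.sum_erase_eq_sub (Finset.mem_univ i), hx_norm]
  have hCS : (∑ j ∈ G.neighborFinset i, x j) ^ 2 ≤ d * ∑ j ∈ G.neighborFinset i, x j ^ 2 := by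
    have h := sq_sum_le_card_mul_sum_sq (s := G.neighborFinset i) (f := x)
    simpa [hdd, SimpleGraph.card_neighborFinset_eq_degree] using h
  have key : ρ ^ 2 * x i ^ 2 ≤ d * (1 - x i ^ 2) := by
    calc ρ ^ 2 * x i ^ 2 = (ρ * x i) ^ 2 := by ring
      _ = (∑ j ∈ G.neighborFinset i, x j) ^ 2 := by rw [heq]
      _ ≤ d * ∑ j ∈ G.neighborFinset i, x j ^ 2 := hCS
      _ ≤ d * (1 - x i ^ 2) := mul_le_mul_of_nonneg_left hsum_le hd0
  by_cases hd : d = 0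
  · have : (1:ℝ) + ρ ^ 2 / d = 1 := by simp [hd]
    rw [this, Real.sqrt_one, div_one]
    nlinarith [hx_pos i]
  · have hdpos : 0 < d := lt_of_le_of_ne hd0 (Ne.symm hd)
    have h1 : (0:ℝ) < 1 + ρ ^ 2 / d := by positivity
    have hx2 : x i ^ 2 ≤ 1 / (1 + ρ ^ 2 / d) := by
      rw [le_div_iff₀ h1]
      have : x i ^ 2 * (1 + ρ ^ 2 / d) = x i ^ 2 + (ρ ^ 2 * x i ^ 2) / d := by ring
      rw [this, ← le_sub_iff_add_le', div_le_iff₀ hdpos] at *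
      nlinarith [key]
    calc x i = Real.sqrt (x i ^ 2) := (Real.sqrt_sq (hx_pos i).le).symm
      _ ≤ Real.sqrt (1 / (1 + ρ ^ 2 / d)) := Real.sqrt_le_sqrt hx2
      _ = 1 / Real.sqrt (1 + ρ ^ 2 / d) := by
          rw [one_div, one_div, Real.sqrt_inv]
end

section
/- Let G be a connected graph on n vertices with principal eigenvector x normalized so that ∑_{i=1}^n x_i² = 1, let ρ be the spectral radius of the adjacency matrix of G, and let d_i denote the degree of vertex i. For a vertex i, equality x_i = 1/√(1 + ρ²/d_i) holds if and only if x_i is the largest entry of x, d_i = n-1, and the subgraph G_(i) obtained from G by deleting vertex i (and all edges incident on it) is regular. -/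
open Matrix

/-!
Summing the eigen-equation over the neighbourhood `N(i)` gives `ρ x i = ∑_{k ∈ N(i)} x k`, so
Cauchy–Schwarz and `∑ x ^ 2 = 1` give
`x i ^ 2 (1 + ρ ^ 2 / d i) = x i ^ 2 + (∑_{N(i)} x) ^ 2 / d i ≤ x i ^ 2 + ∑_{N(i)} x ^ 2 ≤ 1`.
Equality in the first step means that `x` is constant on `N(i)`, in the second (as `x > 0`) that
`i` is adjacent to every other vertex. Then the eigen-equation at `j ≠ i` reads
`ρ c = x i + deg_{G_(i)} j * c`, so `G_(i)` is regular; and `x i` is the largest entry because the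
bound `x j ^ 2 (1 + ρ ^ 2 / d j) ≤ 1` weakens as `d j` grows. Conversely, if `i` is universal and
`G_(i)` is `r`-regular, the eigen-equation at a smallest and at a largest entry off `i` gives
`(ρ - r) x_max ≤ x i ≤ (ρ - r) x_min`, so `x` is constant off `i` and equality holds.
-/

open Finset SimpleGraph

lemma Finset.sum_sum_sub_sq {ι R : Type*} [CommRing R] (s : Finset ι) (f : ι → R) :
    ∑ j ∈ s, ∑ k ∈ s, (f j - f k) ^ 2 = 2 * (#s * ∑ k ∈ s, f k ^ 2 - (∑ k ∈ s, f k) ^ 2) := by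
  simp only [sub_sq, sum_add_distrib, sum_sub_distrib, sum_const, nsmul_eq_mul, ← mul_sum,
    ← sum_mul]
  ring

lemma Finset.sq_sum_div_card_eq_sum_sq_iff {ι R : Type*} [Field R] [LinearOrder R]
    [IsStrictOrderedRing R] {s : Finset ι} {f : ι → R} :
    (∑ k ∈ s, f k) ^ 2 / #s = ∑ k ∈ s, f k ^ 2 ↔ ∀ j ∈ s, ∀ k ∈ s, f j = f k := by
  obtain rfl | hs := s.eq_empty_or_nonempty
  · simp
  calc (∑ k ∈ s, f k) ^ 2 / #s = ∑ k ∈ s, f k ^ 2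
      ↔ ∑ j ∈ s, ∑ k ∈ s, (f j - f k) ^ 2 = 0 := by
        rw [div_eq_iff (by positivity), sum_sum_sub_sq]
        constructor <;> intro h <;> linarith
    _ ↔ ∀ j ∈ s, ∀ k ∈ s, f j = f k := by
        simp only [sum_eq_zero_iff_of_nonneg fun _ _ ↦ sum_nonneg fun _ _ ↦ sq_nonneg _,
          sum_eq_zero_iff_of_nonneg fun _ _ ↦ sq_nonneg _, sq_eq_zero_iff, sub_eq_zero]

lemma Finset.sum_eq_sum_iff_of_subset_of_pos {ι R : Type*} [AddCommMonoid R] [PartialOrder R]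
    [IsOrderedCancelAddMonoid R] {s t : Finset ι} {f : ι → R} (hst : s ⊆ t)
    (hf : ∀ i ∈ t, 0 < f i) : ∑ i ∈ s, f i = ∑ i ∈ t, f i ↔ s = t := by
  refine ⟨fun h ↦ ?_, fun h ↦ h ▸ rfl⟩
  by_contra hne
  obtain ⟨i, hit, his⟩ := exists_of_ssubset (hst.ssubset_of_ne hne)
  exact (sum_lt_sum_of_subset hst hit his (hf i hit) fun j hj _ ↦ (hf j hj).le).ne h

lemma Real.eq_one_div_sqrt_iff {x y : ℝ} (hx : 0 ≤ x) (hy : 0 < y) :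
    x = 1 / √y ↔ x ^ 2 * y = 1 := by
  rw [one_div, ← Real.sqrt_inv, eq_comm, Real.sqrt_eq_iff_eq_sq (inv_nonneg.2 hy.le) hx,
    eq_comm, mul_eq_one_iff_eq_inv₀ hy.ne']

namespace SimpleGraph

section Combinatorics

variable {V : Type*} [Fintype V] [DecidableEq V] (G : SimpleGraph V) [DecidableRel G.Adj]

lemma neighborFinset_subset_erase_univ (j : V) : G.neighborFinset j ⊆ univ.erase j :=
  fun k hk ↦ mem_erase.2 ⟨(G.ne_of_adj ((G.mem_neighborFinset j k).1 hk)).symm, mem_univ k⟩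

lemma degree_induce_compl_singleton (i : V) (v : ({i}ᶜ : Set V)) :
    (G.induce {i}ᶜ).degree v = #((G.neighborFinset v).erase i) := by
  rw [← card_neighborFinset_eq_degree, ← card_map (.subtype _), map_neighborFinset_induce]
  congr 1
  ext k
  simp [and_comm]

end Combinatorics

variable {V : Type*} [Fintype V] {G : SimpleGraph V} [DecidableRel G.Adj] {x : V → ℝ} {ρ : ℝ}

lemma sum_neighborFinset_eq_of_mulVec_eq (heig : G.adjMatrix ℝ *ᵥ x = ρ • x) (j : V) :
    ∑ k ∈ G.neighborFinset j, x k = ρ * x j := by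
  simpa [adjMatrix_mulVec_apply] using congrFun heig j

-- At an isolated vertex both divisions are by zero, so the identity still holds (as `0 = 0`).
lemma sq_mul_one_add_div_degree_eq (heig : G.adjMatrix ℝ *ᵥ x = ρ • x) (j : V) :
    x j ^ 2 * (1 + ρ ^ 2 / G.degree j) =
      x j ^ 2 + (∑ k ∈ G.neighborFinset j, x k) ^ 2 / #(G.neighborFinset j) := by
  rw [sum_neighborFinset_eq_of_mulVec_eq heig, card_neighborFinset_eq_degree]
  ring

lemma sq_sum_neighborFinset_div_card_le (hx_pos : ∀ k, 0 < x k) (j : V) :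
    (∑ k ∈ G.neighborFinset j, x k) ^ 2 / #(G.neighborFinset j) ≤
      ∑ k ∈ G.neighborFinset j, x k ^ 2 := by
  simpa using pow_sum_div_card_le_sum_pow (s := G.neighborFinset j) (fun k _ ↦ (hx_pos k).le) 1

variable [DecidableEq V]

lemma mul_eq_add_sum_erase_of_mulVec_eq (heig : G.adjMatrix ℝ *ᵥ x = ρ • x) {i v : V}
    (hiv : G.Adj i v) : ρ * x v = x i + ∑ k ∈ (G.neighborFinset v).erase i, x k := by
  rw [add_sum_erase _ _ ((G.mem_neighborFinset v i).2 hiv.symm),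
    sum_neighborFinset_eq_of_mulVec_eq heig]

lemma sum_erase_univ_sq_eq (hx_norm : ∑ k, x k ^ 2 = 1) (j : V) :
    ∑ k ∈ univ.erase j, x k ^ 2 = 1 - x j ^ 2 := by
  rw [sum_erase_eq_sub (mem_univ j), hx_norm]

lemma sum_neighborFinset_sq_le (hx_norm : ∑ k, x k ^ 2 = 1) (j : V) :
    ∑ k ∈ G.neighborFinset j, x k ^ 2 ≤ 1 - x j ^ 2 := by
  rw [← sum_erase_univ_sq_eq hx_norm]
  exact sum_le_sum_of_subset_of_nonneg (G.neighborFinset_subset_erase_univ j)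
    fun _ _ _ ↦ sq_nonneg _

lemma sum_neighborFinset_sq_eq_iff (hx_pos : ∀ k, 0 < x k) (hx_norm : ∑ k, x k ^ 2 = 1)
    (j : V) : ∑ k ∈ G.neighborFinset j, x k ^ 2 = 1 - x j ^ 2 ↔ G.IsUniversal j := by
  rw [← sum_erase_univ_sq_eq hx_norm, ← neighborFinset_eq_erase_univ,
    sum_eq_sum_iff_of_subset_of_pos (G.neighborFinset_subset_erase_univ j) fun k _ ↦
      pow_pos (hx_pos k) 2]

lemma sq_mul_one_add_div_degree_le (heig : G.adjMatrix ℝ *ᵥ x = ρ • x)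
    (hx_pos : ∀ k, 0 < x k) (hx_norm : ∑ k, x k ^ 2 = 1) (j : V) :
    x j ^ 2 * (1 + ρ ^ 2 / G.degree j) ≤ 1 := by
  rw [sq_mul_one_add_div_degree_eq heig]
  linarith [sq_sum_neighborFinset_div_card_le (G := G) hx_pos j,
    sum_neighborFinset_sq_le (G := G) hx_norm j]

lemma sq_mul_one_add_div_degree_eq_one_iff (heig : G.adjMatrix ℝ *ᵥ x = ρ • x)
    (hx_pos : ∀ k, 0 < x k) (hx_norm : ∑ k, x k ^ 2 = 1) (j : V) :
    x j ^ 2 * (1 + ρ ^ 2 / G.degree j) = 1 ↔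
      G.IsUniversal j ∧ ∀ k ∈ G.neighborFinset j, ∀ l ∈ G.neighborFinset j, x k = x l := by
  have hCS := sq_sum_neighborFinset_div_card_le (G := G) hx_pos j
  have hT := sum_neighborFinset_sq_le (G := G) hx_norm j
  rw [sq_mul_one_add_div_degree_eq heig, ← sum_neighborFinset_sq_eq_iff hx_pos hx_norm,
    ← sq_sum_div_card_eq_sum_sq_iff]
  constructor
  · intro h
    constructor <;> linarith
  · rintro ⟨hT', hCS'⟩
    linarith

lemma le_of_sq_mul_one_add_div_degree_eq_one (heig : G.adjMatrix ℝ *ᵥ x = ρ • x)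
    (hx_pos : ∀ k, 0 < x k) (hx_norm : ∑ k, x k ^ 2 = 1) {i : V}
    (hi : x i ^ 2 * (1 + ρ ^ 2 / G.degree i) = 1) (j : V) : x j ≤ x i := by
  obtain ⟨hU, -⟩ := (sq_mul_one_add_div_degree_eq_one_iff heig hx_pos hx_norm i).1 hi
  obtain rfl | hji := eq_or_ne j i
  · exact le_rfl
  have hdj : 0 < G.degree j := (G.degree_pos_iff_exists_adj j).2 ⟨i, (hU hji.symm).symm⟩
  have hdji : G.degree j ≤ G.degree i := by
    rw [(G.degree_eq_card_sub_one i).2 hU]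
    exact Nat.le_sub_one_of_lt (G.degree_lt_card_verts j)
  have hsq : x j ^ 2 * (1 + ρ ^ 2 / G.degree i) ≤ x i ^ 2 * (1 + ρ ^ 2 / G.degree i) :=
    calc x j ^ 2 * (1 + ρ ^ 2 / G.degree i) ≤ x j ^ 2 * (1 + ρ ^ 2 / G.degree j) := by gcongr
      _ ≤ 1 := sq_mul_one_add_div_degree_le heig hx_pos hx_norm j
      _ = _ := hi.symm
  exact (pow_le_pow_iff_left₀ (hx_pos j).le (hx_pos i).le two_ne_zero).1
    (le_of_mul_le_mul_right hsq (by positivity))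

lemma exists_isRegularOfDegree_induce_compl_singleton (heig : G.adjMatrix ℝ *ᵥ x = ρ • x)
    (hx_pos : ∀ k, 0 < x k) {i : V} (hU : G.IsUniversal i)
    (hconst : ∀ k ∈ G.neighborFinset i, ∀ l ∈ G.neighborFinset i, x k = x l) :
    ∃ d, (G.induce {i}ᶜ).IsRegularOfDegree d := by
  obtain hempty | ⟨⟨w⟩⟩ := isEmpty_or_nonempty ({i}ᶜ : Set V)
  · exact ⟨0, isEmptyElim⟩
  have hmem : ∀ v : ({i}ᶜ : Set V), (v : V) ∈ G.neighborFinset i :=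
    fun v ↦ (G.mem_neighborFinset i v).2 (hU (Ne.symm v.2))
  have hdeg : ∀ v : ({i}ᶜ : Set V), ((G.induce {i}ᶜ).degree v : ℝ) * x w = ρ * x w - x i := by
    intro v
    have hv := mul_eq_add_sum_erase_of_mulVec_eq heig (hU (Ne.symm v.2))
    rw [hconst _ (hmem v) _ (hmem w), sum_congr rfl fun k hk ↦ hconst k ?_ _ (hmem w),
      sum_const, nsmul_eq_mul] at hv
    · rw [degree_induce_compl_singleton]
      linarith
    · obtain ⟨hki, hk⟩ := mem_erase.1 hk
      exact (G.mem_neighborFinset i k).2 (hU (Ne.symm hki))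
  exact ⟨_, fun v ↦ by
    exact_mod_cast mul_right_cancel₀ (hx_pos w).ne' ((hdeg v).trans (hdeg w).symm)⟩

lemma eq_of_isRegularOfDegree_induce_compl_singleton (heig : G.adjMatrix ℝ *ᵥ x = ρ • x)
    (hx_pos : ∀ k, 0 < x k) {i : V} {r : ℕ} (hU : G.IsUniversal i)
    (hreg : (G.induce {i}ᶜ).IsRegularOfDegree r) :
    ∀ k ∈ G.neighborFinset i, ∀ l ∈ G.neighborFinset i, x k = x l := by
  intro k hk l hl
  have hne : (G.neighborFinset i).Nonempty := ⟨k, hk⟩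
  obtain ⟨m, hm, hmin⟩ := exists_min_image _ x hne
  obtain ⟨M, hM, hmax⟩ := exists_max_image _ x hne
  have hsub : ∀ v, (G.neighborFinset v).erase i ⊆ G.neighborFinset i := fun v u hu ↦
    (G.mem_neighborFinset i u).2 (hU (Ne.symm (mem_erase.1 hu).1))
  have hcard : ∀ v ∈ G.neighborFinset i, #((G.neighborFinset v).erase i) = r := fun v hv ↦ by
    have hvi : v ≠ i := (G.ne_of_adj ((G.mem_neighborFinset i v).1 hv)).symm
    rw [← degree_induce_compl_singleton G i ⟨v, hvi⟩]
    exact hreg _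
  have hlow : x i + r * x m ≤ ρ * x m := by
    rw [mul_eq_add_sum_erase_of_mulVec_eq heig ((G.mem_neighborFinset i m).1 hm), ← hcard m hm,
      ← nsmul_eq_mul]
    gcongr
    exact card_nsmul_le_sum _ _ _ fun u hu ↦ hmin u (hsub m hu)
  have hup : ρ * x M ≤ x i + r * x M := by
    rw [mul_eq_add_sum_erase_of_mulVec_eq heig ((G.mem_neighborFinset i M).1 hM), ← hcard M hM,
      ← nsmul_eq_mul]
    gcongr
    exact sum_le_card_nsmul _ _ _ fun u hu ↦ hmax u (hsub M hu)
  have hρr : 0 < ρ - r :=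
    (pos_iff_pos_of_mul_pos (by linarith [hx_pos i] : 0 < (ρ - r) * x m)).2 (hx_pos m)
  have hMm : x M ≤ x m := le_of_mul_le_mul_left (by linarith) hρr
  linarith [hmin k hk, hmax k hk, hmin l hl, hmax l hl]

end SimpleGraph

theorem stmt3_general {n : ℕ} (G : SimpleGraph (Fin n)) [DecidableRel G.Adj]
    (x : Fin n → ℝ) (ρ : ℝ)
    (hx_pos : ∀ i, 0 < x i)
    (hx_norm : ∑ i, x i ^ 2 = 1)
    (heig : G.adjMatrix ℝ *ᵥ x = ρ • x) :
    ∀ i, x i = 1 / Real.sqrt (1 + ρ ^ 2 / (G.degree i : ℝ)) ↔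
      (∀ j, x j ≤ x i) ∧ G.degree i = n - 1 ∧
        ∃ d, (G.induce ({i}ᶜ : Set (Fin n))).IsRegularOfDegree d := by
  intro i
  have hfull : G.degree i = n - 1 ↔ G.IsUniversal i := by
    simpa using G.degree_eq_card_sub_one i
  rw [Real.eq_one_div_sqrt_iff (hx_pos i).le (by positivity), hfull]
  constructor
  · intro hi
    obtain ⟨hU, hconst⟩ := (sq_mul_one_add_div_degree_eq_one_iff heig hx_pos hx_norm i).1 hi
    exact ⟨le_of_sq_mul_one_add_div_degree_eq_one heig hx_pos hx_norm hi, hU,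
      exists_isRegularOfDegree_induce_compl_singleton heig hx_pos hU hconst⟩
  · rintro ⟨-, hU, r, hreg⟩
    exact (sq_mul_one_add_div_degree_eq_one_iff heig hx_pos hx_norm i).2
      ⟨hU, eq_of_isRegularOfDegree_induce_compl_singleton heig hx_pos hU hreg⟩

/-- **Cioabă–Gregory, equality case.** Let `G` be a connected graph on `n` vertices with
principal eigenvector `x` (normalized so that `∑ x i ^ 2 = 1`), spectral radius `ρ`, and vertex
degrees `d i = G.degree i`. For a vertex `i`, equality `x i = 1 / √(1 + ρ² / d i)` holds if and
only if `x i` is the largest entry of `x`, `d i = n - 1`, and the subgraph `G_(i)` obtained by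
deleting the vertex `i` is regular. -/
theorem stmt3 {n : ℕ} (G : SimpleGraph (Fin n)) [DecidableRel G.Adj]
    (hG : G.Connected) (x : Fin n → ℝ) (ρ : ℝ)
    (hρ : ρ = specRad (G.adjMatrix ℝ))
    (hx_pos : ∀ i, 0 < x i)
    (hx_norm : ∑ i, x i ^ 2 = 1)
    (heig : G.adjMatrix ℝ *ᵥ x = ρ • x) :
    ∀ i, x i = 1 / Real.sqrt (1 + ρ ^ 2 / (G.degree i : ℝ)) ↔
      (∀ j, x j ≤ x i) ∧ G.degree i = n - 1 ∧
        ∃ d, (G.induce ({i}ᶜ : Set (Fin n))).IsRegularOfDegree d :=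
  stmt3_general G x ρ hx_pos hx_norm heig
end

section
/- Let G be a connected graph on n vertices with principal eigenvector x normalized so that ∑_{i=1}^n x_i² = 1, let ρ be the spectral radius of the adjacency matrix of G, and for a vertex i let ρ_i be the spectral radius of the adjacency matrix of the subgraph G_(i) obtained by deleting vertex i. Then for every vertex i, x_i ≥ √((ρ - ρ_i)/(2ρ)). -/
open Matrix

/-!
Restricting the principal eigenvector `x` to the vertices other than `i` gives a test vector `y`
for the adjacency matrix `B` of `G_(i)`, with `y ⬝ y = 1 - xᵢ²` and, because `x` is an eigenvector
and `A` is symmetric with zero diagonal, `y ⬝ B y = ρ - 2ρxᵢ²`. The Rayleigh bound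
`y ⬝ B y ≤ ρᵢ (y ⬝ y)` then gives `ρ - ρᵢ ≤ 2ρxᵢ² - ρᵢxᵢ² ≤ 2ρxᵢ²`.
-/

section SpectralRadius

variable {m : Type*} [Fintype m] [DecidableEq m]

lemma specRad_nonneg (A : Matrix m m ℝ) : 0 ≤ specRad A :=
  Real.sSup_nonneg <| by rintro r ⟨μ, -, rfl⟩; exact abs_nonneg μ

lemma abs_le_specRad_of_mem_spectrum {A : Matrix m m ℝ} {μ : ℝ} (hμ : μ ∈ spectrum ℝ A) :
    |μ| ≤ specRad A := by
  refine le_csSup ?_ ⟨μ, ?_, rfl⟩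
  · refine ((Module.End.finite_hasEigenvalue (toLin' A)).image (|·|)).bddAbove.mono ?_
    rintro r ⟨ν, hν, rfl⟩
    exact ⟨ν, hν, rfl⟩
  · rwa [Module.End.hasEigenvalue_iff_mem_spectrum, spectrum_toLin']

open scoped MatrixOrder in
/-- The spectrum of `A` lies below `specRad A`, so `specRad A • 1 - A` is positive semidefinite. -/
lemma Matrix.IsHermitian.dotProduct_mulVec_le_specRad_mul {A : Matrix m m ℝ}
    (hA : A.IsHermitian) (y : m → ℝ) :
    y ⬝ᵥ (A *ᵥ y) ≤ specRad A * (y ⬝ᵥ y) := by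
  have hle : A ≤ algebraMap ℝ (Matrix m m ℝ) (specRad A) :=
    le_algebraMap_of_spectrum_le
      (fun μ hμ => (le_abs_self μ).trans (abs_le_specRad_of_mem_spectrum hμ)) hA.isSelfAdjoint
  simpa [sub_mulVec, dotProduct_sub, Algebra.algebraMap_eq_smul_one, smul_mulVec, dotProduct_smul]
    using (Matrix.le_iff.mp hle).dotProduct_mulVec_nonneg y

end SpectralRadius

section DeleteVertex

variable {ι R : Type*} [Fintype ι]

lemma Fintype.sum_compl_singleton_subtype [DecidableEq ι] [AddCommGroup R] (i : ι) (f : ι → R) :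
    ∑ a : ({i}ᶜ : Set ι), f a = ∑ a, f a - f i := by
  rw [← Finset.sum_subtype ({i}ᶜ : Finset ι) (by simp) f, Fintype.sum_eq_add_sum_compl i f,
    add_sub_cancel_left]

lemma Matrix.dotProduct_submatrix_compl_singleton_mulVec [DecidableEq ι] [CommRing R]
    (A : Matrix ι ι R) (x : ι → R) (i : ι) :
    let y : ({i}ᶜ : Set ι) → R := fun a => x a
    y ⬝ᵥ (A.submatrix Subtype.val Subtype.val *ᵥ y) =
      x ⬝ᵥ (A *ᵥ x) - x i * (A *ᵥ x) i - (x ᵥ* A) i * x i + x i * A i i * x i := by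
  intro y
  have hrow (a : ({i}ᶜ : Set ι)) :
      (A.submatrix Subtype.val Subtype.val *ᵥ y) a = (A *ᵥ x) a - A a i * x i :=
    Fintype.sum_compl_singleton_subtype i (fun b => A a b * x b)
  rw [dotProduct, Finset.sum_congr rfl fun a _ => congrArg (y a * ·) (hrow a),
    Fintype.sum_compl_singleton_subtype i (fun a => x a * ((A *ᵥ x) a - A a i * x i))]
  simp only [mul_sub, Finset.sum_sub_distrib, vecMul, dotProduct, Finset.sum_mul, mul_assoc]
  ring

lemma SimpleGraph.dotProduct_adjMatrix_induce_compl_singleton_mulVec [DecidableEq ι] [CommRing R]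
    (G : SimpleGraph ι) [DecidableRel G.Adj] (i : ι) [DecidableRel (G.induce ({i}ᶜ : Set ι)).Adj]
    {x : ι → R} {ρ : R} (h : G.adjMatrix R *ᵥ x = ρ • x) :
    let y : ({i}ᶜ : Set ι) → R := fun a => x a
    y ⬝ᵥ ((G.induce ({i}ᶜ : Set ι)).adjMatrix R *ᵥ y) = ρ * (x ⬝ᵥ x) - 2 * ρ * x i ^ 2 := by
  have hvecMul : x ᵥ* G.adjMatrix R = ρ • x := by
    rw [← G.transpose_adjMatrix (α := R), vecMul_transpose, h]
  rw [← (SimpleGraph.Embedding.induce ({i}ᶜ : Set ι)).submatrix_adjMatrix (α := R)]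
  refine (dotProduct_submatrix_compl_singleton_mulVec (G.adjMatrix R) x i).trans ?_
  simp only [h, hvecMul, dotProduct_smul, Pi.smul_apply, smul_eq_mul, adjMatrix_apply,
    SimpleGraph.irrefl, if_false]
  ring

lemma SimpleGraph.nonneg_of_adjMatrix_mulVec_eq_smul [Field R] [LinearOrder R]
    [IsStrictOrderedRing R] (G : SimpleGraph ι) [DecidableRel G.Adj] {x : ι → R} {ρ : R} {i : ι}
    (hx : ∀ a, 0 ≤ x a) (hxi : 0 < x i) (h : G.adjMatrix R *ᵥ x = ρ • x) : 0 ≤ ρ := by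
  refine nonneg_of_mul_nonneg_left ?_ hxi
  have hi := congrFun h i
  rw [adjMatrix_mulVec_apply, Pi.smul_apply, smul_eq_mul] at hi
  exact hi ▸ Finset.sum_nonneg fun a _ => hx a

end DeleteVertex

theorem stmt4_general {n : ℕ} (G : SimpleGraph (Fin n)) [DecidableRel G.Adj]
    (x : Fin n → ℝ) (ρ : ℝ)
    (hx_pos : ∀ i, 0 < x i)
    (hx_norm : ∑ i, x i ^ 2 = 1)
    (heig : G.adjMatrix ℝ *ᵥ x = ρ • x) :
    ∀ i, x i ≥ Real.sqrt ((ρ - specRad ((G.induce ({i}ᶜ : Set (Fin n))).adjMatrix ℝ)) / (2 * ρ)) := by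
  intro i
  set ρᵢ := specRad ((G.induce ({i}ᶜ : Set (Fin n))).adjMatrix ℝ)
  let y : ({i}ᶜ : Set (Fin n)) → ℝ := fun a => x a
  have hxx : x ⬝ᵥ x = 1 := by simpa [dotProduct, sq] using hx_norm
  have hyy : y ⬝ᵥ y = 1 - x i ^ 2 := by
    rw [dotProduct, Fintype.sum_compl_singleton_subtype i (fun a => x a * x a), ← hxx, sq]
    rfl
  have hrayleigh : ρ - 2 * ρ * x i ^ 2 ≤ ρᵢ * (1 - x i ^ 2) := by
    have := (G.induce ({i}ᶜ : Set (Fin n))).isHermitian_adjMatrix ℝ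
      |>.dotProduct_mulVec_le_specRad_mul y
    rwa [G.dotProduct_adjMatrix_induce_compl_singleton_mulVec i heig, hxx, mul_one, hyy] at this
  have hρ : 0 ≤ ρ := G.nonneg_of_adjMatrix_mulVec_eq_smul (fun a => (hx_pos a).le) (hx_pos i) heig
  have hρᵢ : 0 ≤ ρᵢ := specRad_nonneg _
  rw [ge_iff_le, Real.sqrt_le_left (hx_pos i).le]
  exact div_le_of_le_mul₀ (by positivity) (sq_nonneg _) (by nlinarith)

/-- **Li–Wang–Van Mieghem.** Let `G` be a connected graph on `n` vertices with principal
eigenvector `x` (normalized so that `∑ x i ^ 2 = 1`) and spectral radius `ρ`, and for a vertex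
`i` let `ρᵢ` be the spectral radius of the adjacency matrix of the subgraph `G_(i)` obtained by
deleting the vertex `i`. Then for every vertex `i`, `x i ≥ √((ρ - ρᵢ) / (2ρ))`. -/
theorem stmt4 {n : ℕ} (G : SimpleGraph (Fin n)) [DecidableRel G.Adj]
    (hG : G.Connected) (x : Fin n → ℝ) (ρ : ℝ)
    (hρ : ρ = specRad (G.adjMatrix ℝ))
    (hx_pos : ∀ i, 0 < x i)
    (hx_norm : ∑ i, x i ^ 2 = 1)
    (heig : G.adjMatrix ℝ *ᵥ x = ρ • x) :
    ∀ i, x i ≥ Real.sqrt ((ρ - specRad ((G.induce ({i}ᶜ : Set (Fin n))).adjMatrix ℝ)) / (2 * ρ)) :=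
  stmt4_general G x ρ hx_pos hx_norm heig
end

section
/- Let G be a connected graph on n vertices with principal eigenvector x normalized so that ∑_{i=1}^n x_i² = 1, let ρ be the spectral radius of the adjacency matrix of G, let d_i denote the degree of vertex i, and let ρ_i be the spectral radius of the adjacency matrix of the subgraph G_(i) obtained by deleting vertex i. Then for every vertex i, x_i ≥ 1/√(1 + d_i/(ρ - ρ_i)²). -/
open Matrix

/-!
Write `A` for the adjacency matrix of `G`, `B` for that of `G_(i)`, and `y = x - x_i e_i`.
Since `A` is symmetric with zero diagonal and `A x = ρ x`, the restriction of `y` to `V ∖ {i}`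
satisfies `y·By = ρ |y|² - ρ x_i²`, while `y·By ≤ ρ_i |y|²`; hence
`(ρ - ρ_i) |y|² ≤ ρ x_i²`. By Cauchy–Schwarz over the neighbours of `i`,
`ρ x_i = (A y)_i ≤ √d_i |y|`. Combining the two and `|y|² = 1 - x_i²` gives
`(ρ - ρ_i)² (1 - x_i²) ≤ d_i x_i²`, which rearranges to the claim once `ρ_i < ρ`.

That strict inequality is the Perron–Frobenius part: extending `|z|` by zero, for `z` an
eigenvector of `B` with eigenvalue `±ρ_i`, gives a nonnegative `w ≠ 0` with `ρ_i w ≤ A w`.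
Pairing with the positive vector `x` shows `ρ_i ≤ ρ`, and equality would force `A w = ρ w`;
the zero set of such a `w` is closed under adjacency, so connectivity and `w_i = 0` give `w = 0`.
-/

lemma sum_set_coe_eq_sum_of_eq_zero {V : Type*} [Fintype V] {s : Set V} [Fintype s] {f : V → ℝ}
    (hf : ∀ j ∉ s, f j = 0) : ∑ j : s, f j = ∑ j, f j := by
  rw [Finset.sum_set_coe]
  exact Finset.sum_subset (Finset.subset_univ _) fun j _ hj => hf j (by simpa using hj)

namespace Matrix

section SpectralRadius

variable {m : Type*} [Fintype m] [DecidableEq m]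

lemma hasEigenvalue_toLin'_iff_mem_spectrum (A : Matrix m m ℝ) (μ : ℝ) :
    Module.End.HasEigenvalue (toLin' A) μ ↔ μ ∈ spectrum ℝ A := by
  rw [Module.End.hasEigenvalue_iff_mem_spectrum, ← AlgEquiv.spectrum_eq toLinAlgEquiv' A]
  rfl

lemma specRad_eq_sSup_image_abs (A : Matrix m m ℝ) :
    specRad A = sSup ((|·|) '' spectrum ℝ A) := by
  simp only [specRad, hasEigenvalue_toLin'_iff_mem_spectrum, Set.image, eq_comm]

lemma abs_le_specRad {A : Matrix m m ℝ} {μ : ℝ} (hμ : μ ∈ spectrum ℝ A) : |μ| ≤ specRad A := by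
  rw [specRad_eq_sSup_image_abs]
  exact le_csSup (A.finite_real_spectrum.image _).bddAbove (Set.mem_image_of_mem _ hμ)

lemma IsHermitian.exists_mulVec_eq_smul_abs_eq_specRad [Nonempty m] {A : Matrix m m ℝ}
    (hA : A.IsHermitian) :
    ∃ (μ : ℝ) (z : m → ℝ), z ≠ 0 ∧ A *ᵥ z = μ • z ∧ |μ| = specRad A := by
  have hne : (spectrum ℝ A).Nonempty :=
    ⟨_, hA.eigenvalues_mem_spectrum_real (Classical.arbitrary m)⟩
  obtain ⟨μ, hμ, hμA⟩ : specRad A ∈ (|·|) '' spectrum ℝ A := by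
    rw [specRad_eq_sSup_image_abs]
    exact (hne.image _).csSup_mem (A.finite_real_spectrum.image _)
  obtain ⟨z, hz⟩ :=
    ((hasEigenvalue_toLin'_iff_mem_spectrum A μ).mpr hμ).exists_hasEigenvector
  exact ⟨μ, z, hz.2, by simpa only [toLin'_apply] using hz.apply_eq_smul, hμA⟩

/-- `specRad A • 1 - A` has nonnegative spectrum, hence is positive semidefinite. -/
lemma IsHermitian.dotProduct_mulVec_le_specRad_mul_s5 {A : Matrix m m ℝ} (hA : A.IsHermitian)
    (y : m → ℝ) : y ⬝ᵥ (A *ᵥ y) ≤ specRad A * (y ⬝ᵥ y) := by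
  have hpsd : (specRad A • (1 : Matrix m m ℝ) - A).PosSemidef := by
    rw [posSemidef_iff_isHermitian_and_spectrum_nonneg]
    refine ⟨(isHermitian_one.smul (IsSelfAdjoint.all _)).sub hA, ?_⟩
    rw [← Algebra.algebraMap_eq_smul_one, ← spectrum.singleton_sub_eq]
    rintro _ ⟨_, rfl, μ, hμ, rfl⟩
    simpa using (le_abs_self μ).trans (abs_le_specRad hμ)
  simpa [sub_mulVec, dotProduct_sub, smul_mulVec, dotProduct_smul] using
    hpsd.dotProduct_mulVec_nonneg y

end SpectralRadius

variable {V : Type*} [Fintype V]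

lemma sub_single_dotProduct_mulVec_sub_single [DecidableEq V] {A : Matrix V V ℝ}
    (hA : Aᵀ = A) (x : V → ℝ) (i : V) :
    (x - Pi.single i (x i)) ⬝ᵥ (A *ᵥ (x - Pi.single i (x i)))
      = x ⬝ᵥ (A *ᵥ x) - 2 * x i * (A *ᵥ x) i + A i i * x i ^ 2 := by
  have hsym : x ⬝ᵥ (A *ᵥ Pi.single i (x i)) = x i * (A *ᵥ x) i := by
    rw [dotProduct_mulVec, ← mulVec_transpose, hA, dotProduct_single, mul_comm]
  simp only [mulVec_sub, dotProduct_sub, sub_dotProduct, single_dotProduct, hsym]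
  simp only [mulVec_single, Pi.smul_apply, col_apply, op_smul_eq_mul]
  ring

lemma sub_single_dotProduct_sub_single [DecidableEq V] (x : V → ℝ) (i : V) :
    (x - Pi.single i (x i)) ⬝ᵥ (x - Pi.single i (x i)) = x ⬝ᵥ x - x i ^ 2 := by
  simp only [dotProduct_sub, sub_dotProduct, single_dotProduct, dotProduct_single,
    Pi.sub_apply, Pi.single_eq_same]
  ring

lemma domRestrict_dotProduct_domRestrict {s : Set V} [Fintype s] {u : V → ℝ}
    (hu : ∀ j ∉ s, u j = 0) (v : V → ℝ) : s.domRestrict u ⬝ᵥ s.domRestrict v = u ⬝ᵥ v :=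
  sum_set_coe_eq_sum_of_eq_zero (f := fun j => u j * v j) fun j hj => by simp [hu j hj]

lemma submatrix_mulVec_domRestrict (A : Matrix V V ℝ) {s : Set V} [Fintype s] {v : V → ℝ}
    (hv : ∀ j ∉ s, v j = 0) :
    A.submatrix (↑) (↑) *ᵥ s.domRestrict v = s.domRestrict (A *ᵥ v) := by
  ext j
  exact sum_set_coe_eq_sum_of_eq_zero (f := fun k => A j k * v k) fun k hk => by simp [hv k hk]

lemma abs_mulVec_apply_le {A : Matrix V V ℝ} (hA : ∀ j k, 0 ≤ A j k) (z : V → ℝ) (j : V) :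
    |(A *ᵥ z) j| ≤ (A *ᵥ fun k => |z k|) j := by
  simpa only [mulVec, dotProduct, abs_mul, abs_of_nonneg (hA _ _)] using
    Finset.abs_sum_le_sum_abs (fun k => A j k * z k) Finset.univ

lemma mulVec_eq_smul_of_le_mulVec {A : Matrix V V ℝ} {x w : V → ℝ} {ρ r : ℝ}
    (hx : ∀ j, 0 < x j) (hxA : x ᵥ* A = ρ • x) (hw : 0 ≤ w)
    (hle : ∀ j, r * w j ≤ (A *ᵥ w) j) (hρr : ρ ≤ r) : A *ᵥ w = r • w := by
  have hterm_nonneg : ∀ j, 0 ≤ x j * ((A *ᵥ w) j - r * w j) := fun j =>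
    mul_nonneg (hx j).le (sub_nonneg.mpr (hle j))
  have hsum : ∑ j, x j * ((A *ᵥ w) j - r * w j) = (ρ - r) * (x ⬝ᵥ w) := by
    simp only [mul_sub, Finset.sum_sub_distrib, mul_left_comm _ r, ← Finset.mul_sum]
    change x ⬝ᵥ (A *ᵥ w) - r * (x ⬝ᵥ w) = _
    rw [dotProduct_mulVec, hxA, smul_dotProduct, smul_eq_mul, sub_mul]
  have hsum_nonpos : ∑ j, x j * ((A *ᵥ w) j - r * w j) ≤ 0 := hsum ▸
    mul_nonpos_of_nonpos_of_nonneg (by linarith)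
      (dotProduct_nonneg_of_nonneg (fun j => (hx j).le) hw)
  have hterm := (Finset.sum_eq_zero_iff_of_nonneg fun j _ => hterm_nonneg j).mp
    (hsum_nonpos.antisymm (Finset.sum_nonneg fun j _ => hterm_nonneg j))
  ext j
  have := (mul_eq_zero.mp (hterm j (Finset.mem_univ j))).resolve_left (hx j).ne'
  rw [Pi.smul_apply, smul_eq_mul]
  linarith

end Matrix

lemma one_div_sqrt_le_of_one_le_sq_mul {a t : ℝ} (ha : 0 < a) (h : 1 ≤ a ^ 2 * (1 + t)) :
    1 / √(1 + t) ≤ a := by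
  have ht : 0 < 1 + t := pos_of_mul_pos_right (one_pos.trans_le h) (sq_nonneg a)
  rw [div_le_iff₀ (Real.sqrt_pos.mpr ht)]
  calc 1 ≤ √(a ^ 2 * (1 + t)) := Real.one_le_sqrt.mpr h
    _ = a * √(1 + t) := by rw [Real.sqrt_mul (sq_nonneg a), Real.sqrt_sq ha.le]

namespace SimpleGraph

variable {V : Type*} (G : SimpleGraph V) [DecidableRel G.Adj]

lemma adjMatrix_nonneg (j k : V) : 0 ≤ G.adjMatrix ℝ j k := by
  rw [adjMatrix_apply]; split_ifs <;> norm_num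

lemma adjMatrix_induce {α : Type*} [Zero α] [One α] (s : Set V) [Fintype s]
    [DecidableRel (G.induce s).Adj] :
    (G.induce s).adjMatrix α = (G.adjMatrix α).submatrix (↑) (↑) := by
  ext j k
  simp [adjMatrix_apply]

variable [Fintype V]

lemma sq_adjMatrix_mulVec_apply_le (v : V → ℝ) (i : V) :
    (G.adjMatrix ℝ *ᵥ v) i ^ 2 ≤ G.degree i * (v ⬝ᵥ v) := by
  rw [adjMatrix_mulVec_apply]
  calc (∑ u ∈ G.neighborFinset i, v u) ^ 2
      ≤ (G.neighborFinset i).card * ∑ u ∈ G.neighborFinset i, v u ^ 2 :=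
        sq_sum_le_card_mul_sum_sq
    _ ≤ G.degree i * (v ⬝ᵥ v) := by
        rw [card_neighborFinset_eq_degree, dotProduct]
        gcongr
        simpa only [sq] using Finset.sum_le_univ_sum_of_nonneg fun u => mul_self_nonneg (v u)

variable {G}

lemma Connected.eq_zero_of_adjMatrix_mulVec_eq_smul (hG : G.Connected) {w : V → ℝ}
    (hw : 0 ≤ w) {c : ℝ} (h : G.adjMatrix ℝ *ᵥ w = c • w) {i : V} (hi : w i = 0) : w = 0 := by
  have hclosed : ∀ j k, G.Adj j k → w j = 0 → w k = 0 := by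
    intro j k hjk hj
    have hsum : ∑ u ∈ G.neighborFinset j, w u = 0 := by
      rw [← adjMatrix_mulVec_apply, h, Pi.smul_apply, hj, smul_zero]
    exact (Finset.sum_eq_zero_iff_of_nonneg fun u _ => hw u).mp hsum k
      ((G.mem_neighborFinset j k).mpr hjk)
  funext k
  obtain ⟨p⟩ := hG.preconnected i k
  induction p with
  | nil => exact hi
  | cons hadj _ ih => exact ih (hclosed _ _ hadj hi)

lemma abs_mul_le_adjMatrix_mulVec_of_induce {s : Set V} [Fintype s]
    [DecidableRel (G.induce s).Adj] {z : s → ℝ} {μ : ℝ}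
    (hz : (G.induce s).adjMatrix ℝ *ᵥ z = μ • z) {w : V → ℝ} (hw : 0 ≤ w)
    (hw_out : ∀ j ∉ s, w j = 0) (hw_in : s.domRestrict w = fun k => |z k|) (j : V) :
    |μ| * w j ≤ (G.adjMatrix ℝ *ᵥ w) j := by
  by_cases hj : j ∈ s
  · have hBw :
        s.domRestrict (G.adjMatrix ℝ *ᵥ w) = (G.induce s).adjMatrix ℝ *ᵥ fun k => |z k| := by
      rw [adjMatrix_induce, ← hw_in, submatrix_mulVec_domRestrict _ hw_out]
    have hwj : w j = |z ⟨j, hj⟩| := congrFun hw_in ⟨j, hj⟩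
    calc |μ| * w j = |((G.induce s).adjMatrix ℝ *ᵥ z) ⟨j, hj⟩| := by
          rw [hz, hwj, Pi.smul_apply, smul_eq_mul, abs_mul]
      _ ≤ ((G.induce s).adjMatrix ℝ *ᵥ fun k => |z k|) ⟨j, hj⟩ :=
          abs_mulVec_apply_le (adjMatrix_nonneg _) z _
      _ = (G.adjMatrix ℝ *ᵥ w) j := (congrFun hBw ⟨j, hj⟩).symm
  · rw [hw_out j hj, mul_zero, adjMatrix_mulVec_apply]
    exact Finset.sum_nonneg fun u _ => hw u

lemma dotProduct_adjMatrix_mulVec_le_specRad_induce_mul [DecidableEq V] {s : Set V} [Fintype s]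
    [DecidableRel (G.induce s).Adj] {y : V → ℝ} (hy : ∀ j ∉ s, y j = 0) :
    y ⬝ᵥ (G.adjMatrix ℝ *ᵥ y) ≤ specRad ((G.induce s).adjMatrix ℝ) * (y ⬝ᵥ y) := by
  have hBy : (G.induce s).adjMatrix ℝ *ᵥ s.domRestrict y = s.domRestrict (G.adjMatrix ℝ *ᵥ y) := by
    rw [adjMatrix_induce]; exact submatrix_mulVec_domRestrict _ hy
  have := ((G.induce s).isHermitian_adjMatrix ℝ).dotProduct_mulVec_le_specRad_mul_s5 (s.domRestrict y)
  rwa [hBy, domRestrict_dotProduct_domRestrict hy, domRestrict_dotProduct_domRestrict hy] at this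

theorem Connected.specRad_induce_lt [DecidableEq V] (hG : G.Connected) {s : Set V}
    [Fintype s] [Nonempty s] [DecidableRel (G.induce s).Adj] {i : V} (hi : i ∉ s)
    {x : V → ℝ} {ρ : ℝ} (hx : ∀ j, 0 < x j) (heig : G.adjMatrix ℝ *ᵥ x = ρ • x) :
    specRad ((G.induce s).adjMatrix ℝ) < ρ := by
  obtain ⟨μ, z, hz0, hz, hμ⟩ :=
    ((G.induce s).isHermitian_adjMatrix ℝ).exists_mulVec_eq_smul_abs_eq_specRad
  set w := Function.extend ((↑) : s → V) (fun k => |z k|) 0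
  have hw_in : s.domRestrict w = fun k => |z k| :=
    funext (Subtype.val_injective.extend_apply (fun k : s => |z k|) 0)
  have hw_out : ∀ j ∉ s, w j = 0 := fun j hj =>
    Function.extend_apply' _ _ _ fun ⟨k, hk⟩ => hj (hk ▸ k.2)
  have hw : 0 ≤ w := fun j => by
    by_cases hj : j ∈ s
    · exact (abs_nonneg _).trans_eq (congrFun hw_in ⟨j, hj⟩).symm
    · exact (hw_out j hj).ge
  have hw_ne : w ≠ 0 := fun h0 => hz0 (funext fun k => abs_eq_zero.mp <|
    (congrFun hw_in k).symm.trans (congrFun h0 k))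
  have hxA : x ᵥ* G.adjMatrix ℝ = ρ • x := by
    rw [← mulVec_transpose, transpose_adjMatrix, heig]
  by_contra! hle
  have hAw := mulVec_eq_smul_of_le_mulVec hx hxA hw
    (hμ ▸ abs_mul_le_adjMatrix_mulVec_of_induce hz hw hw_out hw_in) hle
  exact hw_ne (hG.eq_zero_of_adjMatrix_mulVec_eq_smul hw hAw (hw_out i hi))

theorem sq_sub_specRad_induce_compl_mul_le [DecidableEq V] {x : V → ℝ} {ρ : ℝ}
    (hx_norm : ∑ j, x j ^ 2 = 1) (heig : G.adjMatrix ℝ *ᵥ x = ρ • x) (i : V)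
    [Fintype ({i}ᶜ : Set V)] [DecidableRel (G.induce {i}ᶜ).Adj]
    (hle : specRad ((G.induce {i}ᶜ).adjMatrix ℝ) ≤ ρ) :
    (ρ - specRad ((G.induce {i}ᶜ).adjMatrix ℝ)) ^ 2 * (1 - x i ^ 2)
      ≤ G.degree i * x i ^ 2 := by
  set ρi := specRad ((G.induce {i}ᶜ).adjMatrix ℝ)
  set y := x - Pi.single i (x i)
  have hxx : x ⬝ᵥ x = 1 := by simpa only [dotProduct, sq] using hx_norm
  have hy_out : ∀ j ∉ ({i}ᶜ : Set V), y j = 0 := fun j hj => by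
    rw [Set.notMem_compl_iff, Set.mem_singleton_iff] at hj
    simp [y, hj]
  have hyy : y ⬝ᵥ y = 1 - x i ^ 2 := by rw [sub_single_dotProduct_sub_single, hxx]
  have hAy : (G.adjMatrix ℝ *ᵥ y) i = ρ * x i := by
    simp only [y, mulVec_sub, Pi.sub_apply, heig, mulVec_single, Pi.smul_apply, col_apply,
      adjMatrix_apply, SimpleGraph.irrefl, ↓reduceIte, op_smul_eq_mul, zero_mul, sub_zero,
      smul_eq_mul]
  have hyAy : y ⬝ᵥ (G.adjMatrix ℝ *ᵥ y) = ρ * (y ⬝ᵥ y) - ρ * x i ^ 2 := by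
    rw [sub_single_dotProduct_mulVec_sub_single (transpose_adjMatrix G), heig, hyy,
      dotProduct_smul, hxx]
    simp only [smul_eq_mul, mul_one, Pi.smul_apply, adjMatrix_apply, SimpleGraph.irrefl,
      ↓reduceIte, zero_mul, add_zero]
    ring
  have hray : y ⬝ᵥ (G.adjMatrix ℝ *ᵥ y) ≤ ρi * (y ⬝ᵥ y) :=
    dotProduct_adjMatrix_mulVec_le_specRad_induce_mul hy_out
  have hcs : (ρ * x i) ^ 2 ≤ G.degree i * (y ⬝ᵥ y) := hAy ▸ G.sq_adjMatrix_mulVec_apply_le y i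
  have hgap : (ρ - ρi) * (y ⬝ᵥ y) ≤ ρ * x i ^ 2 := by linarith
  have hY : 0 ≤ y ⬝ᵥ y := dotProduct_self_star_nonneg y
  rw [← hyy]
  rcases hY.eq_or_lt with hY0 | hYpos
  · rw [← hY0, mul_zero]; positivity
  · refine le_of_mul_le_mul_right ?_ hYpos
    calc (ρ - ρi) ^ 2 * (y ⬝ᵥ y) * (y ⬝ᵥ y) = ((ρ - ρi) * (y ⬝ᵥ y)) ^ 2 := by ring
      _ ≤ (ρ * x i ^ 2) ^ 2 := by gcongr
      _ = x i ^ 2 * (ρ * x i) ^ 2 := by ring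
      _ ≤ x i ^ 2 * (G.degree i * (y ⬝ᵥ y)) := by gcongr
      _ = G.degree i * x i ^ 2 * (y ⬝ᵥ y) := by ring

end SimpleGraph

theorem stmt5_general {n : ℕ} (G : SimpleGraph (Fin n)) [DecidableRel G.Adj]
    (hG : G.Connected) (x : Fin n → ℝ) (ρ : ℝ)
    (hx_pos : ∀ i, 0 < x i)
    (hx_norm : ∑ i, x i ^ 2 = 1)
    (heig : G.adjMatrix ℝ *ᵥ x = ρ • x) :
    ∀ i, x i ≥ 1 / Real.sqrt (1 + (G.degree i : ℝ) /
      (ρ - specRad ((G.induce ({i}ᶜ : Set (Fin n))).adjMatrix ℝ)) ^ 2) := by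
  intro i
  refine one_div_sqrt_le_of_one_le_sq_mul (hx_pos i) ?_
  set ρi := specRad ((G.induce ({i}ᶜ : Set (Fin n))).adjMatrix ℝ)
  rcases isEmpty_or_nonempty ({i}ᶜ : Set (Fin n)) with hV | hV
  · have hxi : x i ^ 2 = 1 := by
      rwa [Fintype.sum_eq_single i fun j hj => (hV.false ⟨j, hj⟩).elim] at hx_norm
    rw [hxi, one_mul, le_add_iff_nonneg_right]
    positivity
  · have hlt : ρi < ρ := hG.specRad_induce_lt (s := {i}ᶜ) (i := i) (by simp) hx_pos heig
    have key := G.sq_sub_specRad_induce_compl_mul_le hx_norm heig i hlt.le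
    have hgap : 0 < ρ - ρi := sub_pos.mpr hlt
    have : 1 - x i ^ 2 ≤ G.degree i * x i ^ 2 / (ρ - ρi) ^ 2 := by
      rw [le_div_iff₀ (by positivity)]; linarith
    calc 1 ≤ x i ^ 2 + G.degree i * x i ^ 2 / (ρ - ρi) ^ 2 := by linarith
      _ = x i ^ 2 * (1 + G.degree i / (ρ - ρi) ^ 2) := by ring

/-- **Main theorem.** Let `G` be a connected graph on `n` vertices with principal eigenvector
`x` (normalized so that `∑ x i ^ 2 = 1`) and spectral radius `ρ`, let `d i = G.degree i`, and
for a vertex `i` let `ρᵢ` be the spectral radius of the adjacency matrix of the subgraph `G_(i)`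
obtained by deleting the vertex `i`. Then for every vertex `i`,
`x i ≥ 1 / √(1 + d i / (ρ - ρᵢ)²)`. -/
theorem stmt5 {n : ℕ} (G : SimpleGraph (Fin n)) [DecidableRel G.Adj]
    (hG : G.Connected) (x : Fin n → ℝ) (ρ : ℝ)
    (hρ : ρ = specRad (G.adjMatrix ℝ))
    (hx_pos : ∀ i, 0 < x i)
    (hx_norm : ∑ i, x i ^ 2 = 1)
    (heig : G.adjMatrix ℝ *ᵥ x = ρ • x) :
    ∀ i, x i ≥ 1 / Real.sqrt (1 + (G.degree i : ℝ) /
      (ρ - specRad ((G.induce ({i}ᶜ : Set (Fin n))).adjMatrix ℝ)) ^ 2) :=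
  stmt5_general G hG x ρ hx_pos hx_norm heig
end

section
/- Let A be an n×n Hermitian matrix partitioned in block form as A = [[a, bᵀ],[b, B]], where a is a scalar, b is a column vector of length n-1, and B is an (n-1)×(n-1) Hermitian matrix. Let x be a unit eigenvector of A corresponding to the eigenvalue λ. If λ is not an eigenvalue of B, then |x_1|² = 1/(1 + ‖(λI - B)⁻¹ b‖²), where ‖·‖ is the Euclidean norm and x_1 is the first entry of x. -/
/-!
Write `x = (x₁, y)` along the block decomposition. The lower block rows of `A x = λ x` read
`b x₁ + B y = λ y`, i.e. `(λ I - B) y = x₁ b`, so `y = x₁ (λ I - B)⁻¹ b` once `λ` is not an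
eigenvalue of `B`. The normalisation `|x₁|² + ‖y‖² = 1` then becomes
`|x₁|² (1 + ‖(λ I - B)⁻¹ b‖²) = 1`.
-/

open Matrix Module.End

namespace Matrix

variable {ι : Type*} [Fintype ι] [DecidableEq ι]

theorem isUnit_smul_one_sub_of_not_hasEigenvalue {K : Type*} [Field K] {B : Matrix ι ι K}
    {μ : K} (h : ¬ HasEigenvalue (toLin' B) μ) : IsUnit (μ • (1 : Matrix ι ι K) - B) := by
  rwa [hasEigenvalue_iff_mem_spectrum, spectrum_toLin', spectrum.notMem_iff,
    Algebra.algebraMap_eq_smul_one] at h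

theorem smul_one_sub_mulVec_inr_of_fromBlocks_mulVec_eq_smul {κ R : Type*} [Fintype κ]
    [CommRing R] {P : Matrix κ κ R} {Q : Matrix κ ι R} {C : Matrix ι κ R} {D : Matrix ι ι R}
    {x : κ ⊕ ι → R} {μ : R} (h : fromBlocks P Q C D *ᵥ x = μ • x) :
    (μ • (1 : Matrix ι ι R) - D) *ᵥ (x ∘ Sum.inr) = C *ᵥ (x ∘ Sum.inl) := by
  have hlower := congrArg (· ∘ Sum.inr) h
  simp only [fromBlocks_mulVec, Sum.elim_comp_inr] at hlower
  rw [sub_mulVec, smul_mulVec, one_mulVec, ← Pi.smul_comp, ← hlower]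
  abel

theorem comp_inr_eq_smul_inv_mulVec_of_fromBlocks_mulVec_eq_smul {R : Type*} [CommRing R]
    {P : Matrix Unit Unit R} {Q : Matrix Unit ι R} {b : ι → R} {D : Matrix ι ι R}
    {x : Unit ⊕ ι → R} {μ : R} (h : fromBlocks P Q (fun i _ => b i) D *ᵥ x = μ • x)
    (hD : IsUnit (μ • (1 : Matrix ι ι R) - D)) :
    x ∘ Sum.inr = x (Sum.inl ()) • ((μ • (1 : Matrix ι ι R) - D)⁻¹ *ᵥ b) := by
  have hcol : (fun i (_ : Unit) => b i) *ᵥ (x ∘ Sum.inl) = x (Sum.inl ()) • b := by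
    ext i
    simp [mulVec, dotProduct, mul_comm]
  rw [← mulVec_smul, ← hcol, ← smul_one_sub_mulVec_inr_of_fromBlocks_mulVec_eq_smul h,
    mulVec_mulVec, nonsing_inv_mul _ ((isUnit_iff_isUnit_det _).mp hD), one_mulVec]

end Matrix

theorem norm_sq_inl_eq_of_comp_inr_eq_smul {ι 𝕜 : Type*} [Fintype ι] [NormedDivisionRing 𝕜]
    {x : Unit ⊕ ι → 𝕜} {v : ι → 𝕜} (hx : ∑ i, ‖x i‖ ^ 2 = 1)
    (hv : x ∘ Sum.inr = x (Sum.inl ()) • v) :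
    ‖x (Sum.inl ())‖ ^ 2 = 1 / (1 + ∑ i, ‖v i‖ ^ 2) := by
  have hinr (i : ι) : ‖x (Sum.inr i)‖ ^ 2 = ‖x (Sum.inl ())‖ ^ 2 * ‖v i‖ ^ 2 := by
    rw [← Function.comp_apply (f := x), hv, Pi.smul_apply, smul_eq_mul, norm_mul, mul_pow]
  have hpos : (0 : ℝ) < 1 + ∑ i, ‖v i‖ ^ 2 := by positivity
  rw [eq_div_iff hpos.ne']
  calc ‖x (Sum.inl ())‖ ^ 2 * (1 + ∑ i, ‖v i‖ ^ 2)
      = ‖x (Sum.inl ())‖ ^ 2 + ∑ i, ‖x (Sum.inr i)‖ ^ 2 := by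
        simp only [hinr, mul_add, mul_one, Finset.mul_sum]
    _ = 1 := by simp [← hx, Fintype.sum_sum_type]

theorem stmt6_general {m : ℕ} (a : ℂ) (b : Fin m → ℂ) (B : Matrix (Fin m) (Fin m) ℂ)
    (A : Matrix (Unit ⊕ Fin m) (Unit ⊕ Fin m) ℂ)
    (hA : A = Matrix.fromBlocks (fun _ _ => a) (fun _ j => star (b j)) (fun i _ => b i) B)
    (x : Unit ⊕ Fin m → ℂ) (lam : ℂ)
    (heig : A *ᵥ x = lam • x)
    (hx_unit : ∑ i, ‖x i‖ ^ 2 = 1)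
    (hlam : ¬ Module.End.HasEigenvalue (Matrix.toLin' B) lam) :
    ‖x (Sum.inl ())‖ ^ 2 =
      1 / (1 + ∑ i, ‖((lam • (1 : Matrix (Fin m) (Fin m) ℂ) - B)⁻¹ *ᵥ b) i‖ ^ 2) := by
  subst hA
  exact norm_sq_inl_eq_of_comp_inr_eq_smul hx_unit <|
    comp_inr_eq_smul_inv_mulVec_of_fromBlocks_mulVec_eq_smul heig
      (isUnit_smul_one_sub_of_not_hasEigenvalue hlam)

/-- **Tao–Vu lemma.** Let the Hermitian matrix `A` be partitioned as `A = [[a, b*],[b, B]]`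
(top-left scalar `a`, first column below the diagonal `b`, lower-right block `B`), and let `x`
be a unit eigenvector of `A` corresponding to the eigenvalue `λ`. If `λ` is not an eigenvalue
of `B`, then `|x₁|² = 1 / (1 + ‖(λ I - B)⁻¹ b‖²)`, where `‖·‖` is the Euclidean norm and `x₁`
is the first entry of `x`. -/
theorem stmt6 {m : ℕ} (a : ℂ) (b : Fin m → ℂ) (B : Matrix (Fin m) (Fin m) ℂ)
    (A : Matrix (Unit ⊕ Fin m) (Unit ⊕ Fin m) ℂ)
    (hA : A = Matrix.fromBlocks (fun _ _ => a) (fun _ j => star (b j)) (fun i _ => b i) B)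
    (hHerm : A.IsHermitian)
    (x : Unit ⊕ Fin m → ℂ) (lam : ℂ)
    (heig : A *ᵥ x = lam • x)
    (hx_unit : ∑ i, ‖x i‖ ^ 2 = 1)
    (hlam : ¬ Module.End.HasEigenvalue (Matrix.toLin' B) lam) :
    ‖x (Sum.inl ())‖ ^ 2 =
      1 / (1 + ∑ i, ‖((lam • (1 : Matrix (Fin m) (Fin m) ℂ) - B)⁻¹ *ᵥ b) i‖ ^ 2) :=
  stmt6_general a b B A hA x lam heig hx_unit hlam
end
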